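/- Let T be a 3-form on V, M a module over Cl(V), γ a real number, and Φ ∈ M an element satisfying (Y ⌟ T)·Φ = −(3γ/n) Y·Φ for every Y ∈ V. Then for every X ∈ V: ∑_{j=1}^{n} T(X, e_j) · (e_j ⌟ T) · Φ = −(18 γ² / n²) X · Φ, where forms and vectors act on M through their images in Cl(V). -/

import Mathlib

noncomputable section

open scoped RealInnerProductSpace

variable {V : Type*} [NormedAddCommGroup V] [InnerProductSpace ℝ V]

/-- The quadratic form `Q(v) = -⟨v,v⟩` on a real inner product space, so that
`X·Y + Y·X = -2⟨X,Y⟩` holds in the Clifford algebra. -/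
def negInnerQuadraticForm (V : Type*) [NormedAddCommGroup V] [InnerProductSpace ℝ V] :
    QuadraticForm ℝ V :=
  - LinearMap.BilinMap.toQuadraticMap (innerₗ V : LinearMap.BilinForm ℝ V)

/-- The interior product (contraction) `X ⌟ ω` of an exterior form `ω` by a vector `X`,
using the inner product to identify `X` with a dual vector. -/
def interiorProd (X : V) (ω : ExteriorAlgebra ℝ V) : ExteriorAlgebra ℝ V :=
  CliffordAlgebra.contractLeft (Q := (0 : QuadraticForm ℝ V))
    (innerₗ V X) ω

/-- The canonical linear isomorphism from the exterior algebra to the Clifford algebra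
`Cl(V)` of `Q(v) = -⟨v,v⟩`, sending `e_{i₁} ∧ ⋯ ∧ e_{iₚ}` (for orthonormal vectors) to the
Clifford product `e_{i₁} ⋯ e_{iₚ}`. -/
def exteriorToClifford (ω : ExteriorAlgebra ℝ V) :
    CliffordAlgebra (negInnerQuadraticForm V) :=
  letI : Invertible (2 : ℝ) := invertibleOfNonzero two_ne_zero
  (CliffordAlgebra.equivExterior (negInnerQuadraticForm V)).symm ω

/-- The submodule of `p`-forms, i.e. the `p`-th exterior power inside the exterior algebra. -/
def pForms (V : Type*) [NormedAddCommGroup V] [InnerProductSpace ℝ V] (p : ℕ) :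
    Submodule ℝ (ExteriorAlgebra ℝ V) :=
  LinearMap.range (ExteriorAlgebra.ι ℝ : V →ₗ[ℝ] ExteriorAlgebra ℝ V) ^ p

/-- Evaluation `T(X,Y,Z)` of a 3-form `T` (given as an element of the exterior algebra):
the scalar part of the triple contraction `Z ⌟ (Y ⌟ (X ⌟ T))`. -/
def eval3 (T : ExteriorAlgebra ℝ V) (X Y Z : V) : ℝ :=
  ExteriorAlgebra.algebraMapInv (interiorProd Z (interiorProd Y (interiorProd X T)))

/-! For a 2-form `a ∧ b`, the sum `∑ⱼ (eⱼ ⌟ (a ∧ b))♯ · eⱼ` is `b·a - a·b = -2 (a·b + ⟨a,b⟩)`,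
which is `-2 (a ∧ b)` in `Cl(V)`. Applied to the 2-form `X ⌟ T` this gives
`∑ⱼ T(X,eⱼ)·eⱼ = -2 (X ⌟ T)`. The hypothesis on `Φ`, used once for each `eⱼ ⌟ T` and once for
`X ⌟ T`, then produces the factor `-2 (3γ/n)²`. -/

local notation "ιQ" => CliffordAlgebra.ι (negInnerQuadraticForm V)
local notation "ιE" => ExteriorAlgebra.ι ℝ (M := V)

lemma interiorProd_add (X : V) (x y : ExteriorAlgebra ℝ V) :
    interiorProd X (x + y) = interiorProd X x + interiorProd X y :=
  map_add _ _ _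

lemma interiorProd_smul (X : V) (r : ℝ) (x : ExteriorAlgebra ℝ V) :
    interiorProd X (r • x) = r • interiorProd X x :=
  map_smul _ _ _

lemma interiorProd_sub (X : V) (x y : ExteriorAlgebra ℝ V) :
    interiorProd X (x - y) = interiorProd X x - interiorProd X y :=
  map_sub _ _ _

lemma interiorProd_ι (X m : V) :
    interiorProd X (ιE m) = algebraMap ℝ _ ⟪X, m⟫ :=
  CliffordAlgebra.contractLeft_ι (0 : QuadraticForm ℝ V) (d := innerₗ V X) m

lemma algebraMapInv_interiorProd_ι (Z v : V) :
    ExteriorAlgebra.algebraMapInv (interiorProd Z (ιE v)) = ⟪Z, v⟫ := by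
  rw [interiorProd_ι, ExteriorAlgebra.algebraMap_leftInverse]

lemma interiorProd_ι_mul (X m : V) (x : ExteriorAlgebra ℝ V) :
    interiorProd X (ιE m * x) = ⟪X, m⟫ • x - ιE m * interiorProd X x :=
  CliffordAlgebra.contractLeft_ι_mul (Q := (0 : QuadraticForm ℝ V)) (d := innerₗ V X) m x

lemma interiorProd_ι_mul_ι (X a b : V) :
    interiorProd X (ιE a * ιE b) = ⟪X, a⟫ • ιE b - ⟪X, b⟫ • ιE a := by
  rw [interiorProd_ι_mul, interiorProd_ι, Algebra.algebraMap_eq_smul_one, mul_smul_comm, mul_one]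

lemma interiorProd_mem_pForms {p : ℕ} {ω : ExteriorAlgebra ℝ V} (hω : ω ∈ pForms V (p + 1))
    (X : V) : interiorProd X ω ∈ pForms V p := by
  induction p generalizing ω with
  | zero =>
    rw [pForms, zero_add, pow_one] at hω
    obtain ⟨m, rfl⟩ := hω
    rw [interiorProd_ι, pForms, pow_zero]
    exact Submodule.algebraMap_mem _
  | succ p ih =>
    rw [pForms, pow_succ'] at hω
    refine Submodule.mul_induction_on hω (fun v hv x hx => ?_) (fun x y hx hy => ?_)
    · obtain ⟨m, rfl⟩ := hv
      rw [interiorProd_ι_mul]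
      refine sub_mem (Submodule.smul_mem _ _ hx) ?_
      rw [pForms, pow_succ']
      exact Submodule.mul_mem_mul (LinearMap.mem_range_self _ m) (ih hx)
    · rw [interiorProd_add]
      exact add_mem hx hy

lemma negInnerQuadraticForm_apply (v : V) : negInnerQuadraticForm V v = -⟪v, v⟫ := rfl

lemma polar_negInnerQuadraticForm (a b : V) :
    QuadraticMap.polar (negInnerQuadraticForm V) a b = -(2 * ⟪a, b⟫) := by
  simp only [QuadraticMap.polar, negInnerQuadraticForm_apply, real_inner_add_add_self]
  ring

lemma exteriorToClifford_add (x y : ExteriorAlgebra ℝ V) :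
    exteriorToClifford (x + y) = exteriorToClifford x + exteriorToClifford y :=
  map_add _ x y

open CliffordAlgebra in
lemma exteriorToClifford_ι_mul_ι (a b : V) :
    exteriorToClifford (ιE a * ιE b) = ιQ a * ιQ b + algebraMap ℝ _ ⟪a, b⟫ := by
  let _ : Invertible (2 : ℝ) := invertibleOfNonzero two_ne_zero
  have hassoc : QuadraticMap.associated (R := ℝ) (negInnerQuadraticForm V) = -innerₗ V := by
    rw [negInnerQuadraticForm, map_neg,
      QuadraticMap.associated_left_inverse ℝ fun x y => real_inner_comm y x]
  rw [show exteriorToClifford (ιE a * ιE b) =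
    changeForm (changeForm.neg_proof changeForm.associated_neg_proof) (ιE a * ιE b) from rfl,
    changeForm_ι_mul_ι]
  simp [hassoc, sub_eq_add_neg]

section OrthonormalBasis

variable {ι : Type*} [Fintype ι] (e : OrthonormalBasis ι ℝ V)

def sharp (α : ExteriorAlgebra ℝ V) : V :=
  ∑ i, ExteriorAlgebra.algebraMapInv (interiorProd (e i) α) • e i

lemma eq_sharp_of_inner {v : V} {α : ExteriorAlgebra ℝ V}
    (h : ∀ Z, ⟪v, Z⟫ = ExteriorAlgebra.algebraMapInv (interiorProd Z α)) : v = sharp e α := by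
  conv_lhs => rw [← e.sum_repr' v]
  simp only [sharp, ← h, real_inner_comm]

lemma sharp_add (α β : ExteriorAlgebra ℝ V) : sharp e (α + β) = sharp e α + sharp e β := by
  simp only [sharp, interiorProd_add, map_add, add_smul, Finset.sum_add_distrib]

lemma sharp_interiorProd_ι_mul_ι (X a b : V) :
    sharp e (interiorProd X (ιE a * ιE b)) = ⟪X, a⟫ • b - ⟪X, b⟫ • a := by
  refine (eq_sharp_of_inner e fun Z => ?_).symm
  simp only [interiorProd_ι_mul_ι, interiorProd_sub, interiorProd_smul, map_sub, map_smul,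
    algebraMapInv_interiorProd_ι, inner_sub_left, real_inner_smul_left, smul_eq_mul]
  rw [real_inner_comm Z b, real_inner_comm Z a]

lemma sum_ι_inner_smul_mul_ι (a b : V) :
    ∑ j, ιQ (⟪e j, a⟫ • b) * ιQ (e j) = ιQ b * ιQ a := by
  conv_rhs => rw [← e.sum_repr' a]
  simp only [map_sum, map_smul, Finset.mul_sum, smul_mul_assoc, mul_smul_comm]

lemma sum_ι_sharp_interiorProd_mul_ι {ω : ExteriorAlgebra ℝ V} (hω : ω ∈ pForms V 2) :
    ∑ j, ιQ (sharp e (interiorProd (e j) ω)) * ιQ (e j) = (-2 : ℝ) • exteriorToClifford ω := by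
  rw [pForms, pow_two] at hω
  refine Submodule.mul_induction_on hω (fun x hx y hy => ?_) (fun x y hx hy => ?_)
  · obtain ⟨a, rfl⟩ := hx
    obtain ⟨b, rfl⟩ := hy
    simp only [sharp_interiorProd_ι_mul_ι, map_sub, sub_mul, Finset.sum_sub_distrib,
      sum_ι_inner_smul_mul_ι, exteriorToClifford_ι_mul_ι]
    rw [CliffordAlgebra.ι_mul_ι_comm, polar_negInnerQuadraticForm, real_inner_comm,
      Algebra.algebraMap_eq_smul_one, Algebra.algebraMap_eq_smul_one]
    module
  · simp only [interiorProd_add, sharp_add, map_add, add_mul, Finset.sum_add_distrib, hx, hy,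
      exteriorToClifford_add, smul_add]

end OrthonormalBasis

/-- Let `T` be a 3-form, `M` a module over `Cl(V)`, `γ ∈ ℝ`, and `Φ ∈ M` satisfying
`(Y ⌟ T)·Φ = -(3γ/n) Y·Φ` for every `Y`. Then for every `X`:
`∑ⱼ T(X,eⱼ)·(eⱼ ⌟ T)·Φ = -(18γ²/n²) X·Φ`. -/
theorem stmt15 {n : ℕ} (e : OrthonormalBasis (Fin n) ℝ V)
    (T : ExteriorAlgebra ℝ V) (hT : T ∈ pForms V 3)
    (TV : V → V → V) (hTV : ∀ X Y Z : V, ⟪TV X Y, Z⟫ = eval3 T X Y Z)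
    (M : Type*) [AddCommGroup M] [Module ℝ M]
    [Module (CliffordAlgebra (negInnerQuadraticForm V)) M]
    [IsScalarTower ℝ (CliffordAlgebra (negInnerQuadraticForm V)) M]
    (γ : ℝ) (Φ : M)
    (hΦ : ∀ Y : V, exteriorToClifford (interiorProd Y T) • Φ =
      (-(3 * γ / (n : ℝ))) • (CliffordAlgebra.ι (negInnerQuadraticForm V) Y • Φ))
    (X : V) :
    ∑ j : Fin n, (CliffordAlgebra.ι (negInnerQuadraticForm V) (TV X (e j)) *
        exteriorToClifford (interiorProd (e j) T)) • Φ =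
      (-(18 * γ ^ 2 / (n : ℝ) ^ 2)) • (CliffordAlgebra.ι (negInnerQuadraticForm V) X • Φ) := by
  set r : ℝ := -(3 * γ / (n : ℝ)) with hr
  have hTV_sharp : ∀ Y, TV X Y = sharp e (interiorProd Y (interiorProd X T)) :=
    fun Y => eq_sharp_of_inner e (hTV X Y)
  have hsum : ∑ j, ιQ (TV X (e j)) * ιQ (e j) =
      (-2 : ℝ) • exteriorToClifford (interiorProd X T) := by
    simp only [hTV_sharp]
    exact sum_ι_sharp_interiorProd_mul_ι e (interiorProd_mem_pForms hT X)
  calc ∑ j, (ιQ (TV X (e j)) * exteriorToClifford (interiorProd (e j) T)) • Φ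
      = ∑ j, r • ((ιQ (TV X (e j)) * ιQ (e j)) • Φ) := by
        simp only [mul_smul, hΦ, smul_comm r]
    _ = r • ((-2 : ℝ) • exteriorToClifford (interiorProd X T)) • Φ := by
        rw [← hsum, Finset.sum_smul, Finset.smul_sum]
    _ = (-(18 * γ ^ 2 / (n : ℝ) ^ 2)) • (ιQ X • Φ) := by
        rw [smul_assoc, hΦ, smul_smul, smul_smul, hr]
        congr 1
        ring
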